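/- Let A be a normal N×N complex matrix all of whose eigenvalues have strictly negative real part, let B be a positive semidefinite N×N matrix with tr(B) = 1, let Δ > 0, and let r = min over eigenvalues λ of A of Re(λ) < 0. Define S(∞) = Δ·∑_{k=0}^{∞} e^{kΔA} B e^{kΔA†}. Then tr(S(∞)) ≥ Δ / (1 − e^{2rΔ}). -/

import Mathlib

open scoped Matrix.Norms.L2Operator ComplexOrder
open Matrix

lemma mem_spectrum_of_eigenvec {n : ℕ} (A : Matrix (Fin n) (Fin n) ℂ) (μ : ℂ)
    (v : Fin n → ℂ) (hv : v ≠ 0) (h : A *ᵥ v = μ • v) : μ ∈ spectrum ℂ A := by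
  rw [spectrum.mem_iff]
  intro hU
  apply hv
  have h0 : (algebraMap ℂ (Matrix (Fin n) (Fin n) ℂ) μ - A) *ᵥ v = 0 := by
    ext i
    simp [Matrix.sub_mulVec, Matrix.algebraMap_eq_diagonal, Matrix.mulVec_diagonal, h]
  obtain ⟨u, hu⟩ := hU
  calc v = 1 *ᵥ v := (Matrix.one_mulVec v).symm
    _ = ((↑u⁻¹ : Matrix (Fin n) (Fin n) ℂ) * (algebraMap ℂ (Matrix (Fin n) (Fin n) ℂ) μ - A)) *ᵥ v := by
        rw [← hu, Units.inv_mul]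
    _ = 0 := by
        rw [← Matrix.mulVec_mulVec, h0, Matrix.mulVec_zero]

lemma eigs_ge {n : ℕ} (A : Matrix (Fin n) (Fin n) ℂ)
    (hnormal : A * Aᴴ = Aᴴ * A) (r : ℝ)
    (hr : ∀ x ∈ Complex.re '' spectrum ℂ A, r ≤ x)
    (hH : (Aᴴ + A).IsHermitian) (i : Fin n) :
    2 * r ≤ hH.eigenvalues i := by
  set H := Aᴴ + A with hHdef
  set t := hH.eigenvalues i with htdef
  have hcomm : A * H = H * A := by rw [hHdef, mul_add, add_mul, hnormal]
  set E := Module.End.eigenspace (Matrix.mulVecLin H) (t : ℂ) with hEdef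
  have hw_mem : (⇑(hH.eigenvectorBasis i) : Fin n → ℂ) ∈ E := by
    apply Module.End.mem_eigenspace_iff.mpr
    rw [Matrix.mulVecLin_apply, hH.mulVec_eigenvectorBasis]
    ext j
    simp [Complex.real_smul, htdef]
  have hw_ne : (⇑(hH.eigenvectorBasis i) : Fin n → ℂ) ≠ 0 := by
    have := hH.eigenvectorBasis.orthonormal.ne_zero i
    intro h
    apply this
    ext j
    exact congrFun h j
  have hinv : ∀ x ∈ E, A.mulVecLin x ∈ E := by
    intro x hx
    rw [Module.End.mem_eigenspace_iff] at hx ⊢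
    simp only [Matrix.mulVecLin_apply] at hx ⊢
    rw [Matrix.mulVec_mulVec, ← hcomm, ← Matrix.mulVec_mulVec, hx, Matrix.mulVec_smul]
  have hE_nontriv : Nontrivial E :=
    nontrivial_of_ne ⟨_, hw_mem⟩ 0 (by simp [Submodule.mk_eq_zero, hw_ne])
  set g : E →ₗ[ℂ] E := LinearMap.restrict A.mulVecLin hinv with hgdef
  obtain ⟨μ, hμ⟩ := Module.End.exists_eigenvalue g
  obtain ⟨x, hx⟩ := hμ.exists_hasEigenvector
  set v : Fin n → ℂ := (x : Fin n → ℂ) with hvdef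
  have hv : v ≠ 0 := fun h => hx.2 (Subtype.ext h)
  have hAv : A *ᵥ v = μ • v := by
    have h1 : g x = μ • x := Module.End.mem_eigenspace_iff.mp hx.1
    have h2 := congrArg (Subtype.val) h1
    rw [LinearMap.restrict_coe_apply] at h2
    rw [← Matrix.mulVecLin_apply]
    exact h2
  have hHv : H *ᵥ v = (t : ℂ) • v := by
    have h0 : H.mulVecLin v = (t : ℂ) • v := Module.End.mem_eigenspace_iff.mp x.2
    rwa [Matrix.mulVecLin_apply] at h0
  have hAHv : Aᴴ *ᵥ v = ((t : ℂ) - μ) • v := by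
    rw [hHdef, Matrix.add_mulVec, hAv] at hHv
    rw [sub_smul]
    exact eq_sub_of_add_eq hHv
  have hc : dotProduct (star v) v ≠ 0 := fun h => hv (dotProduct_star_self_eq_zero.mp h)
  have key : ((t : ℂ) - μ) * dotProduct (star v) v
      = (starRingEnd ℂ) μ * dotProduct (star v) v := by
    calc ((t : ℂ) - μ) * dotProduct (star v) v = dotProduct (star v) (Aᴴ *ᵥ v) := by
          rw [hAHv, dotProduct_smul]; rfl
      _ = dotProduct (star (A *ᵥ v)) v := by
          rw [Matrix.dotProduct_mulVec, ← Matrix.star_mulVec]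
      _ = (starRingEnd ℂ) μ * dotProduct (star v) v := by
          rw [hAv, star_smul, smul_dotProduct]; rfl
  have h3 : (t : ℂ) - μ = (starRingEnd ℂ) μ := mul_right_cancel₀ hc key
  have h4 : (t : ℂ) = μ + (starRingEnd ℂ) μ := by rw [← h3]; ring
  rw [Complex.add_conj] at h4
  have h5 : t = 2 * μ.re := by exact_mod_cast h4
  have h6 : r ≤ μ.re := hr _ ⟨μ, mem_spectrum_of_eigenvec A μ v hv hAv, rfl⟩
  rw [h5]
  linarith

lemma trace_exp_bound {n : ℕ} (A B : Matrix (Fin n) (Fin n) ℂ)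
    (hnormal : A * Aᴴ = Aᴴ * A)
    (hB : B.PosSemidef) (hBtr : B.trace = 1)
    (r : ℝ) (hr : ∀ x ∈ Complex.re '' spectrum ℂ A, r ≤ x)
    (s : ℝ) (hs : 0 ≤ s) :
    Real.exp (2*r*s) ≤
      ((NormedSpace.exp (s • Aᴴ) * NormedSpace.exp (s • A) * B).trace).re := by
  have hH : (Aᴴ + A).IsHermitian := Matrix.isHermitian_transpose_add_self A
  set U : Matrix (Fin n) (Fin n) ℂ := ↑hH.eigenvectorUnitary with hUdef
  have hU_unit : IsUnit U := by
    refine isUnit_iff_exists.mpr ⟨star U, ?_, ?_⟩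
    · exact Unitary.mul_star_self_of_mem hH.eigenvectorUnitary.2
    · exact Unitary.star_mul_self_of_mem hH.eigenvectorUnitary.2
  have hUinv : U⁻¹ = star U :=
    Matrix.inv_eq_right_inv (Unitary.mul_star_self_of_mem hH.eigenvectorUnitary.2)
  set e : Fin n → ℂ := fun i => ((Real.exp (s * hH.eigenvalues i) : ℝ) : ℂ) with hedef
  have h1 : NormedSpace.exp (s • Aᴴ) * NormedSpace.exp (s • A)
      = NormedSpace.exp (s • (Aᴴ + A)) := by
    rw [smul_add, Matrix.exp_add_of_commute]
    exact (Commute.smul_left (hnormal.symm : Commute Aᴴ A) s).smul_right s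
  have hsD : (Matrix.diagonal fun i => ((s * hH.eigenvalues i : ℝ) : ℂ))
      = s • (Matrix.diagonal (RCLike.ofReal ∘ hH.eigenvalues) : Matrix (Fin n) (Fin n) ℂ) := by
    ext i j
    by_cases h : i = j
    · subst h; simp [Complex.real_smul]
    · simp [Matrix.diagonal_apply_ne _ h]
  have h2 : s • (Aᴴ + A) = U * (Matrix.diagonal fun i => ((s * hH.eigenvalues i : ℝ) : ℂ))
      * U⁻¹ := by
    rw [hUinv]
    conv_lhs => rw [hH.spectral_theorem]
    rw [hsD, mul_smul_comm, smul_mul_assoc]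
    rw [Unitary.conjStarAlgAut_apply]
  have hde : NormedSpace.exp (fun i => ((s * hH.eigenvalues i : ℝ) : ℂ)) = e := by
    funext i
    simp only [Pi.exp_def]
    rw [← Complex.exp_eq_exp_ℂ]
    simp [hedef]
  have h3 : NormedSpace.exp (s • (Aᴴ + A)) = U * Matrix.diagonal e * star U := by
    rw [h2, Matrix.exp_conj _ _ hU_unit, Matrix.exp_diagonal, hde, hUinv]
  set C : Matrix (Fin n) (Fin n) ℂ := star U * B * U with hCdef
  have hC : C.PosSemidef := by
    rw [hCdef, Matrix.star_eq_conjTranspose]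
    exact hB.conjTranspose_mul_mul_same U
  have hCtr : C.trace = 1 := by
    rw [hCdef, Matrix.trace_mul_cycle,
      Unitary.mul_star_self_of_mem hH.eigenvectorUnitary.2, Matrix.one_mul, hBtr]
  have htr : (NormedSpace.exp (s • Aᴴ) * NormedSpace.exp (s • A) * B).trace
      = (Matrix.diagonal e * C).trace := by
    rw [h1, h3, hCdef]
    rw [Matrix.mul_assoc (U * Matrix.diagonal e) (star U) B,
      Matrix.trace_mul_comm, ← Matrix.mul_assoc, Matrix.trace_mul_comm]
  have hdiag : ∀ i, 0 ≤ (C i i).re ∧ (C i i).im = 0 := by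
    intro i
    have h0 := hC.dotProduct_mulVec_nonneg (Pi.single i 1)
    have h4 : dotProduct (star (Pi.single i 1)) (C *ᵥ Pi.single i 1) = C i i := by
      have hstar : star (Pi.single i 1 : Fin n → ℂ) = Pi.single i 1 := by
        funext j
        by_cases h : j = i <;> simp [Pi.single_apply, h]
      rw [hstar, single_dotProduct, one_mul]
      simp [Matrix.mulVec_single]
    rw [h4, Complex.le_def] at h0
    exact ⟨by simpa using h0.1, by simpa using h0.2.symm⟩
  have hsum1 : ∑ i, (C i i).re = 1 := by
    have : C.trace.re = (1 : ℂ).re := by rw [hCtr]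
    simpa [Matrix.trace, Matrix.diag, Complex.re_sum] using this
  have htr2 : ((Matrix.diagonal e * C).trace).re
      = ∑ i, Real.exp (s * hH.eigenvalues i) * (C i i).re := by
    rw [Matrix.trace, Complex.re_sum]
    congr 1
    ext i
    simp [Matrix.diag, Matrix.diagonal_mul, hedef, Complex.mul_re,
      ← Complex.ofReal_mul, Complex.exp_ofReal_re, Complex.exp_ofReal_im, (hdiag i).2]
  rw [htr, htr2]
  calc Real.exp (2*r*s) = ∑ i, Real.exp (2*r*s) * (C i i).re := by
        rw [← Finset.mul_sum, hsum1, mul_one]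
    _ ≤ ∑ i, Real.exp (s * hH.eigenvalues i) * (C i i).re := by
        apply Finset.sum_le_sum
        intro i _
        apply mul_le_mul_of_nonneg_right _ (hdiag i).1
        apply Real.exp_le_exp.mpr
        have := eigs_ge A hnormal r hr hH i
        nlinarith

/-- The trace norm (sum of singular values) of a square complex matrix,
realized as `tr √(Mᴴ M)`. -/
noncomputable def traceNorm {n : ℕ} (M : Matrix (Fin n) (Fin n) ℂ) : ℝ :=
  ((((Matrix.posSemidef_conjTranspose_mul_self M).isHermitian.eigenvectorUnitary :
      Matrix (Fin n) (Fin n) ℂ) *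
    diagonal ((fun x : ℝ => (x : ℂ)) ∘ Real.sqrt ∘ (Matrix.posSemidef_conjTranspose_mul_self M).isHermitian.eigenvalues) *
    (star (Matrix.posSemidef_conjTranspose_mul_self M).isHermitian.eigenvectorUnitary :
      Matrix (Fin n) (Fin n) ℂ)).trace).re

/-- Lower bound on the trace of the discretized continuous-time Lyapunov series. -/
theorem continuous_lyapunov_trace_lower_bound {n : ℕ} (A B S : Matrix (Fin n) (Fin n) ℂ)
    (hnormal : A * Aᴴ = Aᴴ * A)
    (hspec : ∀ μ ∈ spectrum ℂ A, μ.re < 0)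
    (hB : B.PosSemidef) (hBtr : B.trace = 1)
    (Δ : ℝ) (hΔ : 0 < Δ)
    (r : ℝ) (hr : IsLeast (Complex.re '' spectrum ℂ A) r)
    (hS : HasSum (fun k : ℕ =>
      NormedSpace.exp ((k * Δ : ℝ) • A) * B * NormedSpace.exp ((k * Δ : ℝ) • Aᴴ)) S) :
    Δ / (1 - Real.exp (2*r*Δ)) ≤ ((Δ • S).trace).re := by
  obtain ⟨μ0, hμ0, hμ0r⟩ := hr.1
  have hrneg : r < 0 := hμ0r ▸ hspec μ0 hμ0
  set q := Real.exp (2*r*Δ) with hq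
  have hq0 : 0 ≤ q := (Real.exp_pos _).le
  have hq1 : q < 1 := by
    rw [hq, Real.exp_lt_one_iff]
    nlinarith
  have hgeo : HasSum (fun k : ℕ => q ^ k) (1 - q)⁻¹ := hasSum_geometric_of_lt_one hq0 hq1
  let g : Matrix (Fin n) (Fin n) ℂ →ₗ[ℝ] ℝ :=
    Complex.reLm.comp ((Matrix.traceLinearMap (Fin n) ℝ ℂ).restrictScalars ℝ)
  have hgcont : Continuous g := g.continuous_of_finiteDimensional
  have hmap := hS.map g hgcont
  have hterm : ∀ k : ℕ, q ^ k ≤ (⇑g ∘ fun k : ℕ =>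
      NormedSpace.exp ((k * Δ : ℝ) • A) * B * NormedSpace.exp ((k * Δ : ℝ) • Aᴴ)) k := by
    intro k
    have hs : (0:ℝ) ≤ k * Δ := mul_nonneg (Nat.cast_nonneg k) hΔ.le
    have hb := trace_exp_bound A B hnormal hB hBtr r hr.2 (k * Δ) hs
    have hcyc : (NormedSpace.exp ((k * Δ : ℝ) • A) * B * NormedSpace.exp ((k * Δ : ℝ) • Aᴴ)).trace
        = (NormedSpace.exp ((k * Δ : ℝ) • Aᴴ) * NormedSpace.exp ((k * Δ : ℝ) • A) * B).trace := by
      rw [Matrix.trace_mul_cycle]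
    have hqk : q ^ k = Real.exp (2 * r * (k * Δ)) := by
      rw [hq, ← Real.exp_nat_mul]
      ring_nf
    show q ^ k ≤ ((NormedSpace.exp ((k * Δ : ℝ) • A) * B
        * NormedSpace.exp ((k * Δ : ℝ) • Aᴴ)).trace).re
    rw [hcyc, hqk]
    exact hb
  have hmain : (1 - q)⁻¹ ≤ g S := hasSum_le hterm hgeo hmap
  have hgS : g S = (S.trace).re := rfl
  have hfin : ((Δ • S).trace).re = Δ * (S.trace).re := by
    rw [Matrix.trace_smul]
    exact Complex.smul_re Δ S.trace
  rw [hfin, div_eq_mul_inv]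
  rw [hgS] at hmain
  exact mul_le_mul_of_nonneg_left hmain hΔ.le
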